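/- Let γ > 0 and u₁, u₂, p₁, p₂ ∈ ℝ with u₁ = -[γ p₁ - u₁]_+ (exact contact condition). Set e := u₁ - u₂, P_i := γ p_i - u_i. Then -γ⁻¹ e² - ([P₁]_+ - [P₂]_+)(p₁ - p₂ - γ⁻¹e) - 2γ⁻¹ e([P₁]_+ - [P₂]_+) ≤ -γ⁻¹([P₂]_+ + u₂)². -/

import Mathlib

/-! With `d := [P₁]_+ - [P₂]_+`, the contact condition gives `[P₂]_+ + u₂ = -(e + d)`, so the
right-hand side is `-γ⁻¹ (e + d)²` and the inequality collapses to `d² ≤ d (P₁ - P₂)`: firm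
nonexpansiveness of the positive part, which holds for every monotone 1-Lipschitz map. -/

noncomputable def pp (x : ℝ) : ℝ := max 0 x

/-- Firm nonexpansiveness: a monotone map moves `f x - f y` in the direction of `x - y`, and the
Lipschitz bound makes it no longer. -/
theorem sq_sub_le_mul_sub_of_monotone_of_lipschitzWith_one {f : ℝ → ℝ} (hmono : Monotone f)
    (hlip : LipschitzWith 1 f) (x y : ℝ) : (f x - f y) ^ 2 ≤ (f x - f y) * (x - y) := by
  have hsign : 0 ≤ (f x - f y) * (x - y) := (hmono.monovary monotone_id).sub_mul_sub_nonneg y x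
  have hshort : |f x - f y| ≤ |x - y| := by
    simpa [Real.dist_eq] using hlip.dist_le_mul x y
  calc (f x - f y) ^ 2 = |f x - f y| * |f x - f y| := by rw [← sq_abs, sq]
    _ ≤ |f x - f y| * |x - y| := mul_le_mul_of_nonneg_left hshort (abs_nonneg _)
    _ = (f x - f y) * (x - y) := by rw [← abs_mul, abs_of_nonneg hsign]

theorem sq_pp_sub_pp_le (x y : ℝ) : (pp x - pp y) ^ 2 ≤ (pp x - pp y) * (x - y) :=
  sq_sub_le_mul_sub_of_monotone_of_lipschitzWith_one (monotone_const.max monotone_id)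
    (LipschitzWith.id.const_max 0) x y

theorem stmt11 (γ : ℝ) (hγ : 0 < γ) (u₁ u₂ p₁ p₂ : ℝ)
    (hc : u₁ = -pp (γ * p₁ - u₁)) :
    -γ⁻¹ * (u₁ - u₂)^2
      - (pp (γ * p₁ - u₁) - pp (γ * p₂ - u₂)) * (p₁ - p₂ - γ⁻¹ * (u₁ - u₂))
      - 2 * γ⁻¹ * (u₁ - u₂) * (pp (γ * p₁ - u₁) - pp (γ * p₂ - u₂))
      ≤ -γ⁻¹ * (pp (γ * p₂ - u₂) + u₂)^2 := by
  set d := pp (γ * p₁ - u₁) - pp (γ * p₂ - u₂)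
  have hcontact : pp (γ * p₂ - u₂) + u₂ = -((u₁ - u₂) + d) := by linarith
  have hfirm : 0 ≤ γ⁻¹ * (d * (γ * p₁ - u₁ - (γ * p₂ - u₂)) - d ^ 2) :=
    mul_nonneg (inv_nonneg.mpr hγ.le) (sub_nonneg.mpr (sq_pp_sub_pp_le _ _))
  rw [hcontact]
  have hγ₀ : γ⁻¹ * γ = 1 := inv_mul_cancel₀ hγ.ne'
  linear_combination hfirm + d * (p₁ - p₂) * hγ₀
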